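/- arXiv:math/0212275 — 5 statements merged into one kernel-verified Lean document; each statement's English description precedes it below -/
import Mathlib

section
/- Hunt–Dyson formula: For every m ∈ ℕ (m ≥ 1) and all real numbers κ_1, …, κ_m, one has ∑_{τ ∈ S_m} [ M_m(κ_τ) − M_{m−1}(κ_τ) ] = ∑_{τ ∈ S_m} min(0, κ_{τ(1)} + ⋯ + κ_{τ(m)}) / m = (m−1)! · min(0, κ_1 + ⋯ + κ_m). -/
open Finset

/-- `partialMin m κ p` is `min(0, κ₁, κ₁+κ₂, …, κ₁+⋯+κ_p)`,
the minimum of `0` and the first `p` partial sums of `κ`. -/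
noncomputable def partialMin (m : ℕ) (κ : Fin m → ℝ) (p : ℕ) : ℝ :=
  (Finset.range (p + 1)).inf' Finset.nonempty_range_add_one
    (fun i => ∑ t : Fin m, if (t : ℕ) < i then κ t else 0)

/-!
For each rotation `ρⱼ : i ↦ i + j` of `Fin m`, `τ ↦ τ ∘ ρⱼ` permutes `S_m`, so `m` times the
left-hand side is the sum over `τ` of the rotation sums `∑ⱼ (M_m - M_{m-1})(κ_{τ ∘ ρⱼ})`, and each
rotation sum equals `min(0, κ₁ + ⋯ + κ_m)`.

For the rotation sum, let `S` be the partial sums of the periodic extension of `κ_τ`, so that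
`S (n + m) = S n + S m`, and let `g j` be the minimum of `S` on `[j, j + m - 1]`. Rotating by `j`
shifts the partial sums by `S j`, so the `j`-th term is `min_{[j, j + m]} S - g j`. If `S m ≥ 0`
the extra point `S (j + m) = S j + S m ≥ g j` changes nothing. If `S m < 0` the minimum over
`[j, j + m]` is not attained at `j`, since `S (j + m) < S j`, so it is `g (j + 1)`, and the sum
telescopes to `g m - g 0 = S m`.
-/

open Fin.NatCast

theorem sum_univ_sum_range_mul_right {G M : Type*} [Group G] [Fintype G] [AddCommMonoid M]
    (D : G → M) (g : ℕ → G) (m : ℕ) : ∑ τ, ∑ j ∈ range m, D (τ * g j) = m • ∑ τ, D τ := by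
  have h (j : ℕ) : ∑ τ, D (τ * g j) = ∑ τ, D τ :=
    Fintype.sum_equiv (Equiv.mulRight (g j)) _ _ fun _ => rfl
  rw [sum_comm]
  simp only [h, sum_const, Finset.card_range]

noncomputable def windowMin (S : ℕ → ℝ) (j k : ℕ) : ℝ :=
  (range (k + 1)).inf' nonempty_range_add_one fun i => S (j + i)

section windowMin
variable (S : ℕ → ℝ) (j k : ℕ)

theorem windowMin_le {i : ℕ} (hi : i ≤ k) : windowMin S j k ≤ S (j + i) :=
  inf'_le _ (mem_range_succ_iff.mpr hi)

theorem windowMin_succ : windowMin S j (k + 1) = min (windowMin S j k) (S (j + (k + 1))) := by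
  simp only [windowMin, range_add_one (n := k + 1)]
  rw [inf'_insert nonempty_range_add_one, inf_comm]

theorem windowMin_succ' : windowMin S j (k + 1) = min (S j) (windowMin S (j + 1) k) := by
  simp only [windowMin, range_add_one' (k + 1)]
  rw [inf'_insert (by simp), inf'_map]
  simp only [add_zero, Function.comp_def, add_assoc, add_comm 1]
  rfl

theorem windowMin_sub_const (c : ℝ) :
    windowMin (fun n => S n - c) j k = windowMin S j k - c :=
  (map_finset_inf' (OrderIso.addRight (-c)) _ _).symm

theorem windowMin_add_period {m : ℕ} (hS : ∀ n, S (n + m) = S n + S m) :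
    windowMin S (j + m) k = windowMin S j k + S m := by
  rw [← sub_neg_eq_add, ← windowMin_sub_const]
  simp only [windowMin, sub_neg_eq_add, ← hS]
  congr! 2 with i
  ring

theorem sum_windowMin_succ_sub {n : ℕ} (hS : ∀ i, S (i + (n + 1)) = S i + S (n + 1)) :
    ∑ j ∈ range (n + 1), (windowMin S j (n + 1) - windowMin S j n) = min 0 (S (n + 1)) := by
  rcases le_or_gt 0 (S (n + 1)) with hpos | hneg
  · rw [min_eq_left hpos]
    refine sum_eq_zero fun j _ => ?_
    rw [windowMin_succ, min_eq_left, sub_self]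
    calc windowMin S j n ≤ S (j + 0) := windowMin_le S j n (Nat.zero_le n)
      _ ≤ S (j + (n + 1)) := by rw [add_zero, hS]; linarith
  · have hstep (j : ℕ) : windowMin S j (n + 1) = windowMin S (j + 1) n := by
      rw [windowMin_succ', min_eq_right]
      calc windowMin S (j + 1) n ≤ S (j + 1 + n) := windowMin_le S _ n le_rfl
        _ = S j + S (n + 1) := by rw [← hS, add_assoc, add_comm 1]
        _ ≤ S j := by linarith
    have hperiod := windowMin_add_period S 0 n hS
    rw [zero_add] at hperiod
    simp only [hstep]
    rw [sum_range_sub (fun j => windowMin S j n), hperiod, min_eq_right hneg.le]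
    ring

end windowMin

/-- `(k : Fin m)` is `k mod m`: these are the partial sums of the `m`-periodic extension of `f`. -/
noncomputable def cyclicPartialSum {m : ℕ} [NeZero m] (f : Fin m → ℝ) (n : ℕ) : ℝ :=
  ∑ k ∈ range n, f k

section cyclicPartialSum
variable {m : ℕ} [NeZero m] (f : Fin m → ℝ)

theorem sum_univ_ite_lt_eq_cyclicPartialSum {i : ℕ} (hi : i ≤ m) :
    ∑ t : Fin m, (if (t : ℕ) < i then f t else 0) = cyclicPartialSum f i := by
  calc ∑ t : Fin m, (if (t : ℕ) < i then f t else 0)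
      = ∑ k ∈ range m, if k < i then f k else 0 := by
        rw [← Fin.sum_univ_eq_sum_range]; simp only [Fin.cast_val_eq_self]
    _ = cyclicPartialSum f i := by
        rw [← sum_filter, cyclicPartialSum]
        congr 1
        ext k
        simp only [mem_filter, mem_range]
        omega

theorem cyclicPartialSum_self : cyclicPartialSum f m = ∑ i, f i := by
  rw [cyclicPartialSum, ← Fin.sum_univ_eq_sum_range]; simp only [Fin.cast_val_eq_self]

theorem cyclicPartialSum_add_period (n : ℕ) :
    cyclicPartialSum f (n + m) = cyclicPartialSum f n + cyclicPartialSum f m := by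
  rw [add_comm n, cyclicPartialSum, sum_range_add, add_comm]
  simp [cyclicPartialSum]

theorem cyclicPartialSum_rotate (j n : ℕ) :
    cyclicPartialSum (fun i => f (i + (j : Fin m))) n
      = cyclicPartialSum f (j + n) - cyclicPartialSum f j := by
  simp only [cyclicPartialSum]
  rw [sum_range_add, add_sub_cancel_left]
  simp [add_comm]

theorem partialMin_eq_windowMin {p : ℕ} (hp : p ≤ m) :
    partialMin m f p = windowMin (cyclicPartialSum f) 0 p :=
  inf'_congr _ rfl fun i hi => by
    rw [zero_add, sum_univ_ite_lt_eq_cyclicPartialSum f (by rw [mem_range] at hi; omega)]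

theorem partialMin_rotate (j : ℕ) {p : ℕ} (hp : p ≤ m) :
    partialMin m (fun i => f (i + (j : Fin m))) p
      = windowMin (cyclicPartialSum f) j p - cyclicPartialSum f j := by
  rw [partialMin_eq_windowMin _ hp, ← windowMin_sub_const]
  simp only [windowMin, cyclicPartialSum_rotate, zero_add]

end cyclicPartialSum

theorem sum_partialMin_rotate_sub {n : ℕ} (f : Fin (n + 1) → ℝ) :
    ∑ j ∈ range (n + 1),
        (partialMin (n + 1) (fun i => f (i + (j : Fin (n + 1)))) (n + 1)
          - partialMin (n + 1) (fun i => f (i + (j : Fin (n + 1)))) n)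
      = min 0 (∑ i, f i) := by
  simp only [partialMin_rotate f _ le_rfl, partialMin_rotate f _ n.le_succ,
    sub_sub_sub_cancel_right]
  rw [sum_windowMin_succ_sub _ (cyclicPartialSum_add_period f), cyclicPartialSum_self]

theorem hunt_dyson_general (m : ℕ) (κ : Fin m → ℝ) :
    (∑ τ : Equiv.Perm (Fin m),
        (partialMin m (fun i => κ (τ i)) m - partialMin m (fun i => κ (τ i)) (m - 1))
      = ∑ τ : Equiv.Perm (Fin m), min 0 (∑ i : Fin m, κ (τ i)) / (m : ℝ))
    ∧ (∑ τ : Equiv.Perm (Fin m),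
        (partialMin m (fun i => κ (τ i)) m - partialMin m (fun i => κ (τ i)) (m - 1))
      = ((m - 1).factorial : ℝ) * min 0 (∑ i : Fin m, κ i)) := by
  rcases m with _ | n
  · simp
  simp only [Nat.add_sub_cancel]
  have hsum (τ : Equiv.Perm (Fin (n + 1))) : ∑ i, κ (τ i) = ∑ i, κ i := Equiv.sum_comp τ κ
  set D := fun τ : Equiv.Perm (Fin (n + 1)) =>
    partialMin (n + 1) (fun i => κ (τ i)) (n + 1) - partialMin (n + 1) (fun i => κ (τ i)) n
  have hrot (τ : Equiv.Perm (Fin (n + 1))) :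
      ∑ j ∈ range (n + 1), D (τ * Equiv.addRight (j : Fin (n + 1))) = min 0 (∑ i, κ i) := by
    rw [← hsum τ]
    exact sum_partialMin_rotate_sub fun i => κ (τ i)
  have hD : ∑ τ, D τ = n.factorial * min 0 (∑ i, κ i) := by
    have hcount : ((n + 1 : ℕ) : ℝ) * ∑ τ, D τ = ((n + 1).factorial : ℕ) * min 0 (∑ i, κ i) := by
      rw [← nsmul_eq_mul,
        ← sum_univ_sum_range_mul_right D fun j => Equiv.addRight (j : Fin (n + 1))]
      simp [hrot, Fintype.card_perm]
    rw [Nat.factorial_succ, Nat.cast_mul, mul_assoc] at hcount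
    exact mul_left_cancel₀ (by positivity) hcount
  refine ⟨?_, hD⟩
  rw [hD]
  simp only [hsum, sum_const, card_univ, Fintype.card_perm, Fintype.card_fin, nsmul_eq_mul,
    Nat.factorial_succ]
  push_cast
  field_simp

/-- The Hunt–Dyson formula. -/
theorem hunt_dyson (m : ℕ) (hm : 1 ≤ m) (κ : Fin m → ℝ) :
    (∑ τ : Equiv.Perm (Fin m),
        (partialMin m (fun i => κ (τ i)) m - partialMin m (fun i => κ (τ i)) (m - 1))
      = ∑ τ : Equiv.Perm (Fin m), min 0 (∑ i : Fin m, κ (τ i)) / (m : ℝ))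
    ∧ (∑ τ : Equiv.Perm (Fin m),
        (partialMin m (fun i => κ (τ i)) m - partialMin m (fun i => κ (τ i)) (m - 1))
      = ((m - 1).factorial : ℝ) * min 0 (∑ i : Fin m, κ i)) :=
  hunt_dyson_general m κ
end

section
/- Hunt–Dyson formula over the cyclic subgroup: Let m ∈ ℕ (m ≥ 1), let κ_1, …, κ_m be real numbers, and let σ be the cyclic permutation (1 2 ⋯ m) of {1,…,m}. Then ∑_{i=0}^{m−1} [ M_m(κ_{σ^i}) − M_{m−1}(κ_{σ^i}) ] = min(0, κ_1 + ⋯ + κ_m), where the sum runs over the m elements σ^0, σ^1, …, σ^{m−1} of the cyclic subgroup C_m of S_m. -/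
/-!
Write `S k = κ 0 + ⋯ + κ (k - 1)` with indices read mod `m`, so that `S (k + m) = S k + s` for the
total sum `s`. The partial sums of the `i`-th rotation are `S (i + j) - S i`, hence the `i`-th summand
is `W_m i - W_{m-1} i`, where `W_p i` is the minimum of `S` on `[i, i + p]`. If `s ≥ 0`, the new
endpoint `S (i + m) = S i + s` never lowers the minimum and every summand vanishes. If `s ≤ 0`, the
starting point `S i ≥ S (i + m)` can be dropped instead, so `W_m i = W_{m-1} (i + 1)` and the sum
telescopes to `W_{m-1} m - W_{m-1} 0 = s`.
-/

open Finset

namespace HuntDyson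

section WindowMin

variable {α : Type*} [LinearOrder α]

noncomputable def windowMin (S : ℕ → α) (p i : ℕ) : α :=
  (range (p + 1)).inf' nonempty_range_add_one fun j => S (i + j)

variable {S : ℕ → α}

theorem windowMin_le {p j : ℕ} (i : ℕ) (hj : j ≤ p) : windowMin S p i ≤ S (i + j) :=
  inf'_le _ (mem_range_succ_iff.mpr hj)

theorem windowMin_le_self (p i : ℕ) : windowMin S p i ≤ S i :=
  windowMin_le i p.zero_le

theorem windowMin_succ (p i : ℕ) :
    windowMin S (p + 1) i = min (windowMin S p i) (S (i + (p + 1))) := by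
  rw [windowMin, inf'_congr _ (range_add_one (n := p + 1)) fun _ _ => rfl, inf'_insert, min_comm]
  rfl

theorem windowMin_succ' (p i : ℕ) :
    windowMin S (p + 1) i = min (S i) (windowMin S p (i + 1)) := by
  rw [windowMin, inf'_congr _ (range_add_one' (p + 1)) fun _ _ => rfl,
    inf'_insert (by simp), inf'_map]
  exact congrArg (min (S i))
    (inf'_congr _ rfl fun j _ => congrArg S (by omega : i + (j + 1) = i + 1 + j))

end WindowMin

section Periodic

variable {α : Type*} [AddCommGroup α] [LinearOrder α] [IsOrderedAddMonoid α]
  {S : ℕ → α} {n : ℕ} {s : α}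

theorem windowMin_add_const (S : ℕ → α) (p i : ℕ) (c : α) :
    windowMin (fun k => S k + c) p i = windowMin S p i + c :=
  (map_finset_inf' (OrderIso.addRight c) _ _).symm

theorem windowMin_add_period {m : ℕ} (hS : ∀ k, S (k + m) = S k + s) (p i : ℕ) :
    windowMin S p (i + m) = windowMin S p i + s := by
  rw [← windowMin_add_const]
  exact inf'_congr _ rfl fun j _ => by rw [add_right_comm, hS]

theorem windowMin_succ_of_nonneg (hS : ∀ k, S (k + (n + 1)) = S k + s) (hs : 0 ≤ s) (i : ℕ) :
    windowMin S (n + 1) i = windowMin S n i := by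
  rw [windowMin_succ, min_eq_left]
  calc windowMin S n i ≤ S i := windowMin_le_self n i
    _ ≤ S i + s := le_add_of_nonneg_right hs
    _ = S (i + (n + 1)) := (hS i).symm

theorem windowMin_succ_of_nonpos (hS : ∀ k, S (k + (n + 1)) = S k + s) (hs : s ≤ 0) (i : ℕ) :
    windowMin S (n + 1) i = windowMin S n (i + 1) := by
  rw [windowMin_succ', min_eq_right]
  calc windowMin S n (i + 1) ≤ S (i + 1 + n) := windowMin_le _ le_rfl
    _ = S i + s := by rw [add_assoc, add_comm 1, hS]
    _ ≤ S i := add_le_of_nonpos_right hs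

theorem sum_windowMin_succ_sub (hS : ∀ k, S (k + (n + 1)) = S k + s) :
    ∑ i ∈ range (n + 1), (windowMin S (n + 1) i - windowMin S n i) = min 0 s := by
  rcases le_total 0 s with hs | hs
  · rw [min_eq_left hs]
    exact sum_eq_zero fun i _ => sub_eq_zero.mpr (windowMin_succ_of_nonneg hS hs i)
  · simp_rw [min_eq_right hs, windowMin_succ_of_nonpos hS hs]
    rw [sum_range_sub (windowMin S n), ← zero_add (n + 1), windowMin_add_period hS]
    exact add_sub_cancel_left _ _

end Periodic

section Cyclic

open scoped Fin.NatCast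

variable {M : Type*} [AddCommMonoid M] {n : ℕ}

def cyclicPartialSum (κ : Fin (n + 1) → M) (k : ℕ) : M :=
  ∑ j ∈ range k, κ j

theorem cyclicPartialSum_add (κ : Fin (n + 1) → M) (i j : ℕ) :
    cyclicPartialSum κ (i + j) = cyclicPartialSum κ i + ∑ t ∈ range j, κ ↑(i + t) :=
  sum_range_add _ i j

theorem cyclicPartialSum_period (κ : Fin (n + 1) → M) :
    cyclicPartialSum κ (n + 1) = ∑ t, κ t := by
  simp [cyclicPartialSum, ← Fin.sum_univ_eq_sum_range (fun j => κ j)]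

theorem cyclicPartialSum_add_period (κ : Fin (n + 1) → M) (k : ℕ) :
    cyclicPartialSum κ (k + (n + 1)) = cyclicPartialSum κ k + ∑ t, κ t := by
  rw [add_comm, cyclicPartialSum_add, cyclicPartialSum_period, add_comm]
  congr 1
  exact sum_congr rfl fun t _ => by simp

theorem finRotate_pow_apply (i : ℕ) (t : Fin (n + 1)) :
    (finRotate (n + 1) ^ i) t = t + i := by
  induction i generalizing t with
  | zero => simp
  | succ i ih =>
    rw [pow_succ, Equiv.Perm.mul_apply, finRotate_apply, ih, Nat.cast_succ, add_right_comm,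
      add_assoc]

theorem sum_ite_lt_comp_finRotate_pow {G : Type*} [AddCommGroup G] (κ : Fin (n + 1) → G) (i : ℕ)
    {j : ℕ} (hj : j ≤ n + 1) :
    ∑ t : Fin (n + 1), (if (t : ℕ) < j then κ ((finRotate (n + 1) ^ i) t) else 0)
      = cyclicPartialSum κ (i + j) - cyclicPartialSum κ i := by
  have hfilter : (range (n + 1)).filter (· < j) = range j := by
    ext t; simp only [mem_filter, mem_range]; omega
  rw [cyclicPartialSum_add, add_sub_cancel_left, ← hfilter, sum_filter,
    ← Fin.sum_univ_eq_sum_range (fun t => if t < j then κ ↑(i + t) else 0)]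
  simp [finRotate_pow_apply, add_comm]

theorem partialMin_finRotate_pow (κ : Fin (n + 1) → ℝ) (i : ℕ) {p : ℕ} (hp : p ≤ n + 1) :
    partialMin (n + 1) (fun t => κ ((finRotate (n + 1) ^ i) t)) p
      = windowMin (cyclicPartialSum κ) p i - cyclicPartialSum κ i := by
  rw [sub_eq_add_neg, ← windowMin_add_const]
  exact inf'_congr _ rfl fun j hj => by
    rw [sum_ite_lt_comp_finRotate_pow κ i (by have := mem_range.mp hj; omega), sub_eq_add_neg]

end Cyclic

end HuntDyson

open HuntDyson

theorem hunt_dyson_cyclic_general (m : ℕ) (κ : Fin m → ℝ) :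
    ∑ i ∈ Finset.range m,
      (partialMin m (fun t => κ (((finRotate m) ^ i) t)) m
        - partialMin m (fun t => κ (((finRotate m) ^ i) t)) (m - 1))
    = min 0 (∑ t : Fin m, κ t) := by
  cases m with
  | zero => simp
  | succ n =>
    simp only [partialMin_finRotate_pow κ _ le_rfl, partialMin_finRotate_pow κ _ n.le_succ,
      Nat.add_sub_cancel, sub_sub_sub_cancel_right]
    exact sum_windowMin_succ_sub (cyclicPartialSum_add_period κ)

/-- The Hunt–Dyson formula summed over the cyclic subgroup `C_m` generated by
the cyclic permutation `(1 2 ⋯ m)` (which is `finRotate m`). -/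
theorem hunt_dyson_cyclic (m : ℕ) (hm : 1 ≤ m) (κ : Fin m → ℝ) :
    ∑ i ∈ Finset.range m,
      (partialMin m (fun t => κ (((finRotate m) ^ i) t)) m
        - partialMin m (fun t => κ (((finRotate m) ^ i) t)) (m - 1))
    = min 0 (∑ t : Fin m, κ t) :=
  hunt_dyson_cyclic_general m κ
end

section
/- Two-block splitting identity for the minimum of partial sums: Let p ∈ ℕ, p ≥ 3, let μ_1, …, μ_p ∈ ℤ, and let 1 ≤ j ≤ p−2. Then M_p(μ_1, …, μ_p) = M_j(μ_1, …, μ_j) − ( μ_1 + ⋯ + μ_j − M_j(μ_1, …, μ_j) + μ_{j+1} + M_{p−j−1}(μ_{j+2}, …, μ_p) )_−. -/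
/-!
A partial sum of `μ₁, …, μ_p` either stops within the first `j` terms or is
`μ₁ + ⋯ + μ_{j+1}` plus a partial sum of the tail `μ_{j+2}, …, μ_p`, whence
`M_p = min(M_j, μ₁ + ⋯ + μ_{j+1} + M_{p−j−1}(tail))`; the identity is then
`min a b = a − (b − a)₋`.
-/

open Finset

/-- `Mz p μ` is `M_p(μ₁, …, μ_p) = min(0, μ₁, μ₁+μ₂, …, μ₁+⋯+μ_p)`,
the minimum of `0` and all partial sums of the first `p` values of `μ`
(here `μ i` plays the role of `μ_{i+1}`). -/
def Mz (p : ℕ) (μ : ℕ → ℤ) : ℤ :=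
  (Finset.range (p + 1)).inf' Finset.nonempty_range_add_one
    (fun i => ∑ t ∈ Finset.range i, μ t)

section Mz

variable (μ : ℕ → ℤ)

@[simp]
theorem Mz_zero : Mz 0 μ = 0 := by
  simp [Mz]

theorem Mz_succ (n : ℕ) : Mz (n + 1) μ = min (Mz n μ) (∑ t ∈ range (n + 1), μ t) := by
  simp only [Mz, range_add_one (n := n + 1)]
  rw [inf'_insert, min_comm]

theorem Mz_le_sum (n : ℕ) : Mz n μ ≤ ∑ t ∈ range n, μ t :=
  inf'_le _ (self_mem_range_succ n)

theorem Mz_nonpos (n : ℕ) : Mz n μ ≤ 0 :=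
  inf'_le_of_le _ (mem_range.2 n.succ_pos) (by simp)

theorem Mz_add (m n : ℕ) :
    Mz (m + n) μ = min (Mz m μ) (∑ t ∈ range m, μ t + Mz n (fun t => μ (m + t))) := by
  induction n with
  | zero => simp [min_eq_left (Mz_le_sum μ m)]
  | succ n ih =>
    rw [← add_assoc, Mz_succ, ih, Mz_succ, add_assoc m n 1, sum_range_add, min_assoc, add_min]

end Mz

theorem two_block_splitting_general (p : ℕ) (hp : 3 ≤ p) (μ : ℕ → ℤ)
    (j : ℕ) (hj2 : j ≤ p - 2) :
    Mz p μ
      = Mz j μ -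
        max 0 (-((∑ t ∈ Finset.range j, μ t) - Mz j μ + μ j
            + Mz (p - j - 1) (fun t => μ (j + 1 + t)))) := by
  conv_lhs => rw [show p = j + 1 + (p - j - 1) by omega, Mz_add, Mz_succ, sum_range_succ]
  have htail_nonpos := Mz_nonpos (fun t => μ (j + 1 + t)) (p - j - 1)
  omega

/-- Two-block splitting identity for the minimum of partial sums:
`M_p(μ) = M_j(μ₁,…,μ_j)
  − (μ₁+⋯+μ_j − M_j(μ₁,…,μ_j) + μ_{j+1} + M_{p−j−1}(μ_{j+2},…,μ_p))₋`,
where `(x)₋ = max(0, −x)`. -/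
theorem two_block_splitting (p : ℕ) (hp : 3 ≤ p) (μ : ℕ → ℤ)
    (j : ℕ) (hj1 : 1 ≤ j) (hj2 : j ≤ p - 2) :
    Mz p μ
      = Mz j μ -
        max 0 (-((∑ t ∈ Finset.range j, μ t) - Mz j μ + μ j
            + Mz (p - j - 1) (fun t => μ (j + 1 + t)))) :=
  two_block_splitting_general p hp μ j hj2
end

section
/- Three-factor merging identity for the maps Φ_j: Fix p ∈ ℕ and complex numbers x_1, …, x_{p−2}, y_1, …, y_{p−2}, z_1, …, z_{p−2}. Then ∑_{(a,b,c): a,b,c ≥ 1, a+b+c = p} ∑_{α=1}^{a} ∑_{β=1}^{b} ∑_{γ=1}^{c} (1/(α! β! γ!)) · Φ_α[z^a](x_1,…,x_α) · Φ_β[z^b](y_1,…,y_β) · Φ_γ[z^c](z_1,…,z_γ) = ∑_{α ≥ 1} ∑_{β ≥ 1} ∑_{γ ≥ 1} (1/(α! β! γ!)) · Φ_{α+β+γ}[z^p](x_1,…,x_α, y_1,…,y_β, z_1,…,z_γ), where the sums on the right-hand side terminate because Φ_{α+β+γ}[z^p] = 0 whenever α+β+γ > p. -/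
/-!
`Φ_j[z^m](x₁, …, x_j)` is the coefficient of `t^m` in `∏_{i ≤ j} L(xᵢ t)`, where
`L(u) = -log(1 - u) = ∑_{l ≥ 1} u^l / l`. Concatenating argument lists multiplies these
generating series, and as each factor has no constant term, reading off the coefficient of `t^p`
in a product of three gives
`Φ_{α+β+γ}[z^p](x, y, z) = ∑_{a+b+c = p; a, b, c ≥ 1} Φ_α[z^a](x) Φ_β[z^b](y) Φ_γ[z^c](z)`.
Weighting by `1/(α! β! γ!)` and summing gives the theorem, once the ranges `α ≤ a`, `β ≤ b`,
`γ ≤ c` on the left are widened to `≤ p`; this only adds zero terms, since `Φ_α[z^a] = 0` for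
`a < α`.
-/

open Finset

/-- Compositions of `m` into `j` positive parts. -/
def compositions (j m : ℕ) : Finset (Fin j → ℕ) :=
  (Finset.Nat.antidiagonalTuple j m).filter fun k => ∀ i, 1 ≤ k i

/-- `Phi j m x = Φ_j[z^m](x₁, …, x_j) = ∑_{l₁+⋯+l_j = m, lᵢ ≥ 1} ∏ᵢ xᵢ^{lᵢ}/lᵢ`,
with `Φ_j[z^m] = 0` when `m < j` (the sum over compositions is then empty). -/
noncomputable def Phi (j m : ℕ) (x : ℕ → ℂ) : ℂ :=
  ∑ l ∈ compositions j m, ∏ i : Fin j, x (i : ℕ) ^ (l i) / (l i : ℂ)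

open PowerSeries

theorem Finset.sum_comm₃ {ι κ M : Type*} [AddCommMonoid M] {s₁ s₂ s₃ : Finset ι}
    {t₁ t₂ t₃ : Finset κ} (f : ι → ι → ι → κ → κ → κ → M) :
    ∑ a ∈ s₁, ∑ b ∈ s₂, ∑ c ∈ s₃, ∑ d ∈ t₁, ∑ e ∈ t₂, ∑ g ∈ t₃, f a b c d e g =
      ∑ d ∈ t₁, ∑ e ∈ t₂, ∑ g ∈ t₃, ∑ a ∈ s₁, ∑ b ∈ s₂, ∑ c ∈ s₃, f a b c d e g := by
  simpa only [sum_product] using sum_comm (s := s₁ ×ˢ s₂ ×ˢ s₃) (t := t₁ ×ˢ t₂ ×ˢ t₃)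
    (f := fun u v => f u.1 u.2.1 u.2.2 v.1 v.2.1 v.2.2)

theorem Finset.sum_Icc_eq_sum_Icc_of_le {M : Type*} [AddCommMonoid M] {a p : ℕ} (h : a ≤ p)
    {f : ℕ → M} (hf : ∀ j, a < j → f j = 0) : ∑ j ∈ Icc 1 a, f j = ∑ j ∈ Icc 1 p, f j :=
  sum_subset (Icc_subset_Icc_right h) fun j hj hja => hf j (by rw [mem_Icc] at hj hja; omega)

theorem Finset.sum_Icc_ite_add_add_eq_sum_antidiagonal {M : Type*} [AddCommMonoid M] (p : ℕ)
    (f : ℕ → ℕ → ℕ → M) (hf : ∀ a b c, f a b c ≠ 0 → a ≠ 0 ∧ b ≠ 0 ∧ c ≠ 0) :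
    ∑ a ∈ Icc 1 p, ∑ b ∈ Icc 1 p, ∑ c ∈ Icc 1 p, (if a + b + c = p then f a b c else 0) =
      ∑ q ∈ antidiagonal p, ∑ r ∈ antidiagonal q.1, f r.1 r.2 q.2 := by
  rw [sum_sigma' (antidiagonal p) (fun q => antidiagonal q.1) fun q r => f r.1 r.2 q.2]
  have hfilter : ∑ a ∈ Icc 1 p, ∑ b ∈ Icc 1 p, ∑ c ∈ Icc 1 p,
      (if a + b + c = p then f a b c else 0) =
        ∑ t ∈ Icc 1 p ×ˢ Icc 1 p ×ˢ Icc 1 p with t.1 + t.2.1 + t.2.2 = p, f t.1 t.2.1 t.2.2 := by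
    simp only [sum_filter, sum_product]
  rw [hfilter]
  refine sum_bij_ne_zero (fun t _ _ => ⟨(t.1 + t.2.1, t.2.2), (t.1, t.2.1)⟩) ?_ ?_ ?_ ?_
  · intro t ht _
    simp only [mem_filter, mem_product, mem_Icc] at ht
    simp [mem_sigma, ht.2]
  · intro t _ _ t' _ _ h
    simp only [Sigma.mk.injEq, Prod.mk.injEq, heq_eq_eq] at h
    ext <;> omega
  · rintro ⟨⟨s, c⟩, ⟨a, b⟩⟩ hq hne
    simp only [mem_sigma, HasAntidiagonal.mem_antidiagonal] at hq
    obtain ⟨ha, hb, hc⟩ := hf a b c hne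
    refine ⟨(a, b, c), ?_, hne, ?_⟩
    · simp only [mem_filter, mem_product, mem_Icc]
      omega
    · simp [hq.2]
  · intro t _ _
    rfl

theorem PowerSeries.coeff_prod_univ_fin {R : Type*} [CommSemiring R] {k : ℕ} (F : Fin k → R⟦X⟧)
    (m : ℕ) :
    coeff m (∏ i, F i) = ∑ l ∈ Nat.antidiagonalTuple k m, ∏ i, coeff (l i) (F i) := by
  rw [coeff_prod, ← piAntidiag_univ_fin_eq_antidiagonalTuple, finsuppAntidiag, sum_map,
    ← sum_attach (piAntidiag _ _)]
  rfl

theorem PowerSeries.coeff_mul_mul_eq_sum_Icc {R : Type*} [CommSemiring R] {F G H : R⟦X⟧}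
    (hF : coeff 0 F = 0) (hG : coeff 0 G = 0) (hH : coeff 0 H = 0) (p : ℕ) :
    coeff p (F * G * H) = ∑ a ∈ Icc 1 p, ∑ b ∈ Icc 1 p, ∑ c ∈ Icc 1 p,
      if a + b + c = p then coeff a F * coeff b G * coeff c H else 0 := by
  rw [sum_Icc_ite_add_add_eq_sum_antidiagonal]
  · simp only [coeff_mul, sum_mul]
  · intro a b c h
    refine ⟨?_, ?_, ?_⟩ <;> rintro rfl <;> simp_all

theorem mem_compositions {j m : ℕ} {l : Fin j → ℕ} :
    l ∈ compositions j m ↔ ∑ i, l i = m ∧ ∀ i, 1 ≤ l i := by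
  simp [compositions, Nat.mem_antidiagonalTuple]

theorem Phi_eq_zero_of_lt {j m : ℕ} (h : m < j) (x : ℕ → ℂ) : Phi j m x = 0 := by
  refine sum_eq_zero fun l hl => absurd h (not_lt.2 ?_)
  rw [mem_compositions] at hl
  simpa [← hl.1] using sum_le_sum fun i (_ : i ∈ univ) => hl.2 i

/-- `-log (1 - c X)`; its constant coefficient is `1 / 0 = 0`. -/
noncomputable def negLogOneSub (c : ℂ) : ℂ⟦X⟧ := mk fun l => c ^ l / l

noncomputable def PhiSeries (j : ℕ) (x : ℕ → ℂ) : ℂ⟦X⟧ := ∏ i : Fin j, negLogOneSub (x i)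

theorem coeff_PhiSeries (j m : ℕ) (x : ℕ → ℂ) : coeff m (PhiSeries j x) = Phi j m x := by
  rw [PhiSeries, coeff_prod_univ_fin, Phi, compositions, sum_filter_of_ne]
  · simp [negLogOneSub]
  · intro l _ hl i
    by_contra! h0
    exact hl (prod_eq_zero (mem_univ i) (by simp [Nat.lt_one_iff.1 h0]))

theorem coeff_zero_PhiSeries {j : ℕ} (hj : 0 < j) (x : ℕ → ℂ) : coeff 0 (PhiSeries j x) = 0 := by
  rw [coeff_PhiSeries, Phi_eq_zero_of_lt hj]

def seqAppend {α : Type*} (j : ℕ) (x y : ℕ → α) : ℕ → α := fun i => if i < j then x i else y (i - j)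

theorem PhiSeries_append (j k : ℕ) (x y : ℕ → ℂ) :
    PhiSeries (j + k) (seqAppend j x y) = PhiSeries j x * PhiSeries k y := by
  simp [PhiSeries, Fin.prod_univ_add, seqAppend]

theorem seqAppend_seqAppend {α : Type*} (j k : ℕ) (x y z : ℕ → α) :
    seqAppend (j + k) (seqAppend j x y) z =
      fun i => if i < j then x i else if i < j + k then y (i - j) else z (i - j - k) := by
  funext i
  by_cases hj : i < j
  · simp [seqAppend, hj, Nat.lt_add_right k hj]
  · simp [seqAppend, hj, Nat.sub_sub]

theorem sum_Icc_Phi_mul_Phi_mul_Phi {j k l : ℕ} (hj : 0 < j) (hk : 0 < k) (hl : 0 < l) (p : ℕ)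
    (x y z : ℕ → ℂ) :
    ∑ a ∈ Icc 1 p, ∑ b ∈ Icc 1 p, ∑ c ∈ Icc 1 p,
      (if a + b + c = p then Phi j a x * Phi k b y * Phi l c z else 0) =
    Phi (j + k + l) p
      (fun i => if i < j then x i else if i < j + k then y (i - j) else z (i - j - k)) := by
  rw [← seqAppend_seqAppend, ← coeff_PhiSeries, PhiSeries_append, PhiSeries_append,
    coeff_mul_mul_eq_sum_Icc (coeff_zero_PhiSeries hj x) (coeff_zero_PhiSeries hk y)
      (coeff_zero_PhiSeries hl z)]
  simp only [coeff_PhiSeries]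

/-- On the right-hand side the sums over `α, β, γ ≥ 1` terminate (terms with `α+β+γ > p` vanish
since `Φ_{α+β+γ}[z^p] = 0`), so they are written as the equal finite sums up to `p`. -/
theorem phi_three_merge (p : ℕ) (x y z : ℕ → ℂ) :
    ∑ a ∈ Finset.Icc 1 p, ∑ b ∈ Finset.Icc 1 p, ∑ c ∈ Finset.Icc 1 p,
      (if a + b + c = p then
        ∑ α ∈ Finset.Icc 1 a, ∑ β ∈ Finset.Icc 1 b, ∑ γ ∈ Finset.Icc 1 c,
          (1 / ((α.factorial : ℂ) * (β.factorial : ℂ) * (γ.factorial : ℂ))) *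
            (Phi α a x * Phi β b y * Phi γ c z)
      else 0)
    = ∑ α ∈ Finset.Icc 1 p, ∑ β ∈ Finset.Icc 1 p, ∑ γ ∈ Finset.Icc 1 p,
        (1 / ((α.factorial : ℂ) * (β.factorial : ℂ) * (γ.factorial : ℂ))) *
          Phi (α + β + γ) p
            (fun i => if i < α then x i else if i < α + β then y (i - α) else z (i - α - β)) := by
  calc _ = ∑ a ∈ Icc 1 p, ∑ b ∈ Icc 1 p, ∑ c ∈ Icc 1 p,
        ∑ α ∈ Icc 1 p, ∑ β ∈ Icc 1 p, ∑ γ ∈ Icc 1 p,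
          if a + b + c = p then
            1 / ((α.factorial : ℂ) * β.factorial * γ.factorial) *
              (Phi α a x * Phi β b y * Phi γ c z)
          else 0 := by
        refine sum_congr rfl fun a ha => sum_congr rfl fun b hb => sum_congr rfl fun c hc => ?_
        simp only [mem_Icc] at ha hb hc
        simp only [sum_ite_irrel, sum_const_zero]
        congr 1
        rw [sum_Icc_eq_sum_Icc_of_le ha.2 fun j h => by simp [Phi_eq_zero_of_lt h]]
        refine sum_congr rfl fun α _ => ?_
        rw [sum_Icc_eq_sum_Icc_of_le hb.2 fun j h => by simp [Phi_eq_zero_of_lt h]]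
        refine sum_congr rfl fun β _ => ?_
        rw [sum_Icc_eq_sum_Icc_of_le hc.2 fun j h => by simp [Phi_eq_zero_of_lt h]]
    _ = _ := by
        rw [sum_comm₃]
        refine sum_congr rfl fun α hα => sum_congr rfl fun β hβ => sum_congr rfl fun γ hγ => ?_
        simp only [mem_Icc] at hα hβ hγ
        rw [← sum_Icc_Phi_mul_Phi_mul_Phi hα.1 hβ.1 hγ.1]
        simp only [mul_sum, mul_ite, mul_zero]
end

section
/- Integral formula for the 3-map W_3 on monomials: For every integer m ≥ 3 and all real numbers x_1, x_2, x_3 with x_3 ≠ 0, one has x_3 ∫_0^{x_1} ∫_0^{x_2} [ ξ_1^m/(ξ_1(ξ_1−x_3)(ξ_1−ξ_2)) − ξ_2^m/(ξ_2(ξ_2−x_3)(ξ_1−ξ_2)) + x_3^m/(x_3(ξ_1−x_3)(ξ_2−x_3)) ] dξ_2 dξ_1 = ∑_{(k_1,k_2,k_3): k_i ≥ 1, k_1+k_2+k_3 = m} (x_1^{k_1}/k_1) · (x_2^{k_2}/k_2) · x_3^{k_3}. Here the integrand is defined off the measure-zero set where ξ_1 = ξ_2, ξ_1 = x_3, ξ_2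 = x_3, ξ_1 = 0, or ξ_2 = 0; on its complement it equals the polynomial h_{m−3}(ξ_1, ξ_2, x_3) = ∑_{p+q+r=m−3, p,q,r ≥ 0} ξ_1^p ξ_2^q x_3^r, which is locally integrable, so the integral is well defined. -/
open Finset intervalIntegral

/-- Compositions of `m` into `3` positive parts. -/
def compositions3 (m : ℕ) : Finset (Fin 3 → ℕ) :=
  (Finset.Nat.antidiagonalTuple 3 m).filter fun k => ∀ i, 1 ≤ k i

/-!
Off the lines `ξ₁ = ξ₂`, `ξ₁ = x₃`, `ξ₂ = x₃` the integrand is the second divided difference of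
`z ↦ z ^ (m - 1)` at `(ξ₁, ξ₂, x₃)`, i.e. the complete homogeneous polynomial
`h_{m-3}(ξ₁, ξ₂, x₃) = ∑_{p+q+r=m-3} ξ₁^p ξ₂^q x₃^r`; this follows from
`h_n(a,b,c) (b - c) = b h_n(a,b) - c h_n(a,c)` and `h_n(a,b) (a - b) = a^(n+1) - b^(n+1)`.
At `ξ = 0` the junk value `0 / 0 = 0` of `ξ ^ m / (ξ * X)` agrees with `ξ ^ (m - 1) / X`, so the
points `ξᵢ = 0` need no separate treatment. Integrating the monomials termwise gives
`x₁^(p+1)/(p+1) · x₂^(q+1)/(q+1) · x₃^r`, and the factor `x₃` turns `(p, q, r)` into the composition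
`(p+1, q+1, r+1)` of `m`.
-/

theorem Finset.Nat.sum_antidiagonalTuple_succ {M : Type*} [AddCommMonoid M] (d n : ℕ)
    (f : (Fin (d + 1) → ℕ) → M) :
    ∑ k ∈ antidiagonalTuple (d + 1) n, f k =
      ∑ p ∈ antidiagonal n, ∑ t ∈ antidiagonalTuple d p.2, f (Fin.cons p.1 t) := by
  rw [sum_sigma']
  refine sum_nbij' (fun k => (⟨(k 0, n - k 0), Fin.tail k⟩ : (_ : ℕ × ℕ) × (Fin d → ℕ)))
    (fun x => Fin.cons x.1.1 x.2) ?_ ?_ ?_ ?_ ?_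
  · intro k hk
    simp only [mem_sigma, HasAntidiagonal.mem_antidiagonal, mem_antidiagonalTuple] at hk ⊢
    rw [Fin.sum_univ_succ] at hk
    exact ⟨by omega, by simp only [Fin.tail]; omega⟩
  · rintro ⟨⟨i, j⟩, t⟩ h
    simp only [mem_sigma, HasAntidiagonal.mem_antidiagonal, mem_antidiagonalTuple] at h ⊢
    rw [Fin.sum_univ_succ]
    simpa [h.2] using h.1
  · intro k _
    simp
  · rintro ⟨⟨i, j⟩, t⟩ h
    simp only [mem_sigma, HasAntidiagonal.mem_antidiagonal] at h
    simp [← h.1]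
  · intro k _
    simp

section

variable {R : Type*} [CommSemiring R]

def completeHomogeneous (d n : ℕ) (x : Fin d → R) : R :=
  ∑ k ∈ Nat.antidiagonalTuple d n, ∏ i, x i ^ k i

theorem completeHomogeneous_vecCons (d n : ℕ) (a : R) (x : Fin d → R) :
    completeHomogeneous (d + 1) n (Matrix.vecCons a x) =
      ∑ p ∈ antidiagonal n, a ^ p.1 * completeHomogeneous d p.2 x := by
  simp only [completeHomogeneous, Nat.sum_antidiagonalTuple_succ, Fin.prod_univ_succ,
    mul_sum]
  simp

theorem completeHomogeneous_one (n : ℕ) (a : R) : completeHomogeneous 1 n ![a] = a ^ n := by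
  simp [completeHomogeneous, Nat.antidiagonalTuple_one]

theorem completeHomogeneous_two (n : ℕ) (a b : R) :
    completeHomogeneous 2 n ![a, b] = ∑ p ∈ antidiagonal n, a ^ p.1 * b ^ p.2 := by
  rw [completeHomogeneous_vecCons]
  simp only [completeHomogeneous_one]

end

section

variable {R : Type*} [CommRing R]

theorem completeHomogeneous_two_mul_sub (n : ℕ) (a b : R) :
    completeHomogeneous 2 n ![a, b] * (a - b) = a ^ (n + 1) - b ^ (n + 1) := by
  rw [completeHomogeneous_two, Nat.sum_antidiagonal_eq_sum_range_succ_mk, ← geom_sum₂_mul]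
  simp

theorem completeHomogeneous_three_mul_sub (n : ℕ) (a b c : R) :
    completeHomogeneous 3 n ![a, b, c] * (b - c) =
      b * completeHomogeneous 2 n ![a, b] - c * completeHomogeneous 2 n ![a, c] := by
  rw [completeHomogeneous_vecCons, sum_mul]
  simp only [mul_assoc, completeHomogeneous_two_mul_sub]
  rw [completeHomogeneous_two, completeHomogeneous_two, mul_sum, mul_sum, ← sum_sub_distrib]
  refine sum_congr rfl fun p _ => ?_
  ring

end

theorem pow_succ_div_mul_self {K : Type*} [Field K] (a x : K) {k : ℕ} (hk : k ≠ 0) :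
    a ^ (k + 1) / (a * x) = a ^ k / x := by
  rcases eq_or_ne a 0 with rfl | ha
  · simp [hk]
  · rw [pow_succ', mul_div_mul_left _ _ ha]

theorem W3_integrand_eq_completeHomogeneous {K : Type*} [Field K] {a b c : K} (hab : a ≠ b)
    (hac : a ≠ c) (hbc : b ≠ c) (n : ℕ) :
    a ^ (n + 3) / (a * (a - c) * (a - b)) - b ^ (n + 3) / (b * (b - c) * (a - b))
      + c ^ (n + 3) / (c * (a - c) * (b - c)) = completeHomogeneous 3 n ![a, b, c] := by
  have hH := completeHomogeneous_three_mul_sub n a b c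
  have hA := completeHomogeneous_two_mul_sub n a b
  have hC := completeHomogeneous_two_mul_sub n a c
  simp only [mul_assoc, pow_succ_div_mul_self _ _ (k := n + 2) (by omega)]
  have hab' := sub_ne_zero.2 hab
  have hac' := sub_ne_zero.2 hac
  have hbc' := sub_ne_zero.2 hbc
  field_simp
  linear_combination -(a - b) * (a - c) * hH - b * (a - c) * hA + c * (a - b) * hC

namespace intervalIntegral

theorem integral_integral_finsetSum {ι : Type*} (s : Finset ι) (F : ι → ℝ → ℝ → ℝ)
    (hF : ∀ i ∈ s, Continuous (Function.uncurry (F i))) (a b c d : ℝ) :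
    ∫ x in a..b, ∫ y in c..d, ∑ i ∈ s, F i x y = ∑ i ∈ s, ∫ x in a..b, ∫ y in c..d, F i x y :=
  calc
    _ = ∫ x in a..b, ∑ i ∈ s, ∫ y in c..d, F i x y :=
      integral_congr fun x _ => integral_finsetSum fun i hi =>
        ((hF i hi).uncurry_left x).intervalIntegrable _ _
    _ = _ := integral_finsetSum fun i hi =>
      (continuous_parametric_intervalIntegral_of_continuous' (hF i hi) c d).intervalIntegrable _ _

theorem integral_integral_congr_of_ne {a b c d : ℝ} {f g : ℝ → ℝ → ℝ} (z : ℝ)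
    (h : ∀ x y, x ≠ y → x ≠ z → y ≠ z → f x y = g x y) :
    ∫ x in a..b, ∫ y in c..d, f x y = ∫ x in a..b, ∫ y in c..d, g x y := by
  refine integral_congr_ae ?_
  filter_upwards [MeasureTheory.volume.ae_ne z] with x hxz _
  refine integral_congr_ae ?_
  filter_upwards [MeasureTheory.volume.ae_ne x, MeasureTheory.volume.ae_ne z] with y hyx hyz _
  exact h x y (Ne.symm hyx) hxz hyz

theorem integral_integral_pow_mul_pow_mul (p q : ℕ) (a b c : ℝ) :
    ∫ x in (0 : ℝ)..a, ∫ y in (0 : ℝ)..b, x ^ p * y ^ q * c =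
      a ^ (p + 1) / (p + 1) * (b ^ (q + 1) / (q + 1)) * c := by
  simp [integral_mul_const, integral_const_mul]

end intervalIntegral

theorem integral_integral_completeHomogeneous_three (n : ℕ) (a b c : ℝ) :
    ∫ x in (0 : ℝ)..a, ∫ y in (0 : ℝ)..b, completeHomogeneous 3 n ![x, y, c] =
      ∑ k ∈ Nat.antidiagonalTuple 3 n,
        a ^ (k 0 + 1) / (k 0 + 1) * (b ^ (k 1 + 1) / (k 1 + 1)) * c ^ k 2 := by
  simp only [completeHomogeneous, Fin.prod_univ_three, Matrix.cons_val_zero, Matrix.cons_val_one,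
    Matrix.cons_val_two, Matrix.tail_cons, Matrix.head_cons]
  rw [integral_integral_finsetSum _ _ (fun _ _ => by fun_prop)]
  simp only [integral_integral_pow_mul_pow_mul]

theorem sum_compositions3_add_three {M : Type*} [AddCommMonoid M] (n : ℕ) (f : (Fin 3 → ℕ) → M) :
    ∑ k ∈ compositions3 (n + 3), f k = ∑ k ∈ Nat.antidiagonalTuple 3 n, f (k + 1) := by
  have mem_iff (k : Fin 3 → ℕ) :
      k ∈ compositions3 (n + 3) ↔ k 0 + k 1 + k 2 = n + 3 ∧ 1 ≤ k 0 ∧ 1 ≤ k 1 ∧ 1 ≤ k 2 := by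
    simp [compositions3, Nat.mem_antidiagonalTuple, Fin.sum_univ_three, Fin.forall_fin_succ]
  have sub_one_add_one {k} (hk : k ∈ compositions3 (n + 3)) : k - 1 + 1 = k := by
    rw [mem_iff] at hk
    ext i; fin_cases i <;> simp <;> omega
  refine sum_nbij' (· - 1) (· + 1) (fun k hk => ?_) (fun k hk => ?_) (fun k hk => sub_one_add_one hk)
    (fun k _ => add_tsub_cancel_right k 1) (fun k hk => by rw [sub_one_add_one hk])
  all_goals simp only [mem_iff, Nat.mem_antidiagonalTuple, Fin.sum_univ_three] at hk ⊢
  · simp only [Pi.sub_apply, Pi.one_apply]; omega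
  · simp only [Pi.add_apply, Pi.one_apply]; omega

theorem W3_monomial_general (m : ℕ) (hm : 3 ≤ m) (x1 x2 x3 : ℝ) :
    x3 *
      ∫ ξ1 in (0 : ℝ)..x1, ∫ ξ2 in (0 : ℝ)..x2,
        (ξ1 ^ m / (ξ1 * (ξ1 - x3) * (ξ1 - ξ2))
          - ξ2 ^ m / (ξ2 * (ξ2 - x3) * (ξ1 - ξ2))
          + x3 ^ m / (x3 * (ξ1 - x3) * (ξ2 - x3)))
    = ∑ k ∈ compositions3 m,
        x1 ^ (k 0) / ((k 0 : ℕ) : ℝ) * (x2 ^ (k 1) / ((k 1 : ℕ) : ℝ)) * x3 ^ (k 2) := by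
  obtain ⟨n, rfl⟩ := Nat.exists_eq_add_of_le' hm
  rw [integral_integral_congr_of_ne x3 fun ξ1 ξ2 h12 h13 h23 =>
      W3_integrand_eq_completeHomogeneous h12 h13 h23 n,
    integral_integral_completeHomogeneous_three, sum_compositions3_add_three, mul_sum]
  refine sum_congr rfl fun k _ => ?_
  simp only [Pi.add_apply, Pi.one_apply, Nat.cast_add, Nat.cast_one, pow_succ x3]
  ring

/-- Integral formula for the 3-map `W₃` on the monomial `f(z) = z^m`:
`W₃[z^m](x₁,x₂,x₃) = ∑_{k₁+k₂+k₃=m, kᵢ ≥ 1} (x₁^{k₁}/k₁)(x₂^{k₂}/k₂) x₃^{k₃}`.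
(The integrand's junk values on the measure-zero set where some denominator
vanishes do not affect the integral.) -/
theorem W3_monomial (m : ℕ) (hm : 3 ≤ m) (x1 x2 x3 : ℝ) (hx3 : x3 ≠ 0) :
    x3 *
      ∫ ξ1 in (0 : ℝ)..x1, ∫ ξ2 in (0 : ℝ)..x2,
        (ξ1 ^ m / (ξ1 * (ξ1 - x3) * (ξ1 - ξ2))
          - ξ2 ^ m / (ξ2 * (ξ2 - x3) * (ξ1 - ξ2))
          + x3 ^ m / (x3 * (ξ1 - x3) * (ξ2 - x3)))
    = ∑ k ∈ compositions3 m,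
        x1 ^ (k 0) / ((k 0 : ℕ) : ℝ) * (x2 ^ (k 1) / ((k 1 : ℕ) : ℝ)) * x3 ^ (k 2) :=
  W3_monomial_general m hm x1 x2 x3
end
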